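/- Let N be a rooted binary phylogenetic X-network. The map S ↦ N[S] is a bijection (one-to-one correspondence) between the admissible arc-sets of N and the support trees of N. -/

import Mathlib

/-- A finite simple directed graph, given by a finite vertex set and a finite
set of arcs (ordered pairs of vertices) whose endpoints lie in the vertex set. -/
structure Dgraph (V : Type*) where
  verts : Finset V
  arcs : Finset (V × V)
  tail_mem : ∀ a ∈ arcs, a.1 ∈ verts
  head_mem : ∀ a ∈ arcs, a.2 ∈ verts

namespace Dgraph

variable {V : Type*}

/-- The in-degree of a vertex. -/
def indeg [DecidableEq V] (G : Dgraph V) (v : V) : ℕ :=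
  (G.arcs.filter fun a => a.2 = v).card

/-- The out-degree of a vertex. -/
def outdeg [DecidableEq V] (G : Dgraph V) (v : V) : ℕ :=
  (G.arcs.filter fun a => a.1 = v).card

/-- A leaf is a vertex of in-degree 1 and out-degree 0. -/
def IsLeaf [DecidableEq V] (G : Dgraph V) (v : V) : Prop :=
  v ∈ G.verts ∧ G.indeg v = 1 ∧ G.outdeg v = 0

/-- A directed graph is acyclic if it has no directed cycle. -/
def Acyclic (G : Dgraph V) : Prop :=
  ∀ v : V, ¬ Relation.TransGen (fun u w => (u, w) ∈ G.arcs) v v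

def IsSubgraph (H G : Dgraph V) : Prop :=
  H.verts ⊆ G.verts ∧ H.arcs ⊆ G.arcs

/-- The subgraph induced by a set of arcs: its vertices are all endpoints of those arcs. -/
def ofArcs [DecidableEq V] (A : Finset (V × V)) : Dgraph V where
  verts := A.image Prod.fst ∪ A.image Prod.snd
  arcs := A
  tail_mem := fun a ha => Finset.mem_union_left _ (Finset.mem_image_of_mem _ ha)
  head_mem := fun a ha => Finset.mem_union_right _ (Finset.mem_image_of_mem _ ha)

/-- A rooted binary phylogenetic `X`-network: a finite simple directed acyclic graph
with a unique root of in-degree 0 and out-degree 1 or 2, whose leaf set is the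
nonempty finite set `X`, and all of whose other vertices have
`{in-degree, out-degree} = {1, 2}`. -/
def IsRBPN [DecidableEq V] (N : Dgraph V) (X : Finset V) : Prop :=
  N.Acyclic ∧ X.Nonempty ∧ X ⊆ N.verts ∧
  ∃ ρ ∈ N.verts,
    N.indeg ρ = 0 ∧ (N.outdeg ρ = 1 ∨ N.outdeg ρ = 2) ∧
    (∀ v ∈ N.verts, N.indeg v = 0 → v = ρ) ∧
    (∀ v ∈ N.verts, (N.IsLeaf v ↔ v ∈ X)) ∧
    (∀ v ∈ N.verts, v ∉ X → v ≠ ρ →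
      (N.indeg v = 1 ∧ N.outdeg v = 2) ∨ (N.indeg v = 2 ∧ N.outdeg v = 1))

/-- A rooted binary phylogenetic `X`-tree: a rooted binary phylogenetic `X`-network
with no vertex of in-degree 2. -/
def IsRBPT [DecidableEq V] (T : Dgraph V) (X : Finset V) : Prop :=
  IsRBPN T X ∧ ∀ v ∈ T.verts, T.indeg v ≠ 2

/-- `H` is obtained from `G` by inserting one new (subdividing) vertex into one arc. -/
def SubdivideArc [DecidableEq V] (G H : Dgraph V) : Prop :=
  ∃ u v w : V, (u, v) ∈ G.arcs ∧ w ∉ G.verts ∧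
    H.verts = insert w G.verts ∧
    H.arcs = insert (u, w) (insert (w, v) (G.arcs.erase (u, v)))

/-- `IsSubdivisionOf T τ` : `τ` is obtained from `T` by inserting zero or more
subdividing vertices into arcs. -/
inductive IsSubdivisionOf [DecidableEq V] : Dgraph V → Dgraph V → Prop
  | refl (G : Dgraph V) : IsSubdivisionOf G G
  | step {G H K : Dgraph V} : IsSubdivisionOf G H → SubdivideArc H K → IsSubdivisionOf G K

/-- A support tree of `N`: a spanning subgraph of `N` that can be obtained from some
rooted binary phylogenetic `X`-tree by inserting zero or more vertices into each arc. -/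
def IsSupportTree [DecidableEq V] (N : Dgraph V) (X : Finset V) (τ : Dgraph V) : Prop :=
  τ.verts = N.verts ∧ τ.arcs ⊆ N.arcs ∧
  ∃ T : Dgraph V, IsRBPT T X ∧ IsSubdivisionOf T τ

/-- `N` is tree-based if it has a support tree. -/
def IsTreeBased [DecidableEq V] (N : Dgraph V) (X : Finset V) : Prop :=
  ∃ τ : Dgraph V, IsSupportTree N X τ

/-- `S` is an admissible arc-set of `G`. -/
def IsAdmissible [DecidableEq V] (G : Dgraph V) (S : Finset (V × V)) : Prop :=
  S ⊆ G.arcs ∧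
  (∀ a ∈ G.arcs, (G.indeg a.2 = 1 ∨ G.outdeg a.1 = 1) → a ∈ S) ∧
  (∀ a₁ ∈ G.arcs, ∀ a₂ ∈ G.arcs, a₁ ≠ a₂ → a₁.2 = a₂.2 →
    ((a₁ ∈ S ∧ a₂ ∉ S) ∨ (a₁ ∉ S ∧ a₂ ∈ S))) ∧
  (∀ a₁ ∈ G.arcs, ∀ a₂ ∈ G.arcs, a₁ ≠ a₂ → a₁.1 = a₂.1 → (a₁ ∈ S ∨ a₂ ∈ S))

end Dgraph

/-!
Since every in- and out-degree of `N` is at most two, admissibility of `S ⊆ A(N)` says exactly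
that `S` contains one arc entering each non-root vertex and at least one arc leaving each
non-leaf vertex. On the other side, the subdivisions of rooted binary phylogenetic `X`-trees
are exactly the acyclic graphs whose root has in-degree zero, whose other vertices have
in-degree one, whose out-degrees are at most two, and whose vertices of out-degree zero are
exactly `X`: subdividing an arc preserves these conditions, and suppressing a vertex of in- and
out-degree one reverses a subdivision. For a spanning subgraph `τ` of `N` both descriptions say
the same thing about `τ.arcs`, and every vertex of `τ` is an endpoint of one of its arcs, so
`τ = N[τ.arcs]`.
-/

namespace Finset

variable {α : Type*} [DecidableEq α]

lemma nonempty_imp_card_filter_eq_one_iff {F : Finset α} (p : α → Prop) [DecidablePred p]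
    (h2 : F.card ≤ 2) :
    (F.Nonempty → (F.filter p).card = 1) ↔ (F.card = 1 → ∀ a ∈ F, p a) ∧
      ∀ a ∈ F, ∀ b ∈ F, a ≠ b → (p a ∧ ¬p b) ∨ (¬p a ∧ p b) := by
  obtain h0 | h1 | h2 : F.card = 0 ∨ F.card = 1 ∨ F.card = 2 := by omega
  · simp [card_eq_zero.mp h0]
  · obtain ⟨a, rfl⟩ := card_eq_one.mp h1
    by_cases p a <;> simp [filter_singleton, *]
  · obtain ⟨a, b, hab, rfl⟩ := card_eq_two.mp h2
    by_cases p a <;> by_cases p b <;> simp [filter_insert, filter_singleton, hab.symm, *]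

lemma nonempty_imp_filter_nonempty_iff {F : Finset α} (p : α → Prop) [DecidablePred p]
    (h2 : F.card ≤ 2) :
    (F.Nonempty → (F.filter p).Nonempty) ↔ (F.card = 1 → ∀ a ∈ F, p a) ∧
      ∀ a ∈ F, ∀ b ∈ F, a ≠ b → p a ∨ p b := by
  obtain h0 | h1 | h2 : F.card = 0 ∨ F.card = 1 ∨ F.card = 2 := by omega
  · simp [card_eq_zero.mp h0]
  · obtain ⟨a, rfl⟩ := card_eq_one.mp h1
    by_cases p a <;> simp [filter_singleton, *]
  · obtain ⟨a, b, hab, rfl⟩ := card_eq_two.mp h2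
    by_cases p a <;> by_cases p b <;> simp [filter_insert, filter_singleton, hab.symm, *]

end Finset

namespace Dgraph

variable {V : Type*}

lemma ext {G H : Dgraph V} (hv : G.verts = H.verts) (ha : G.arcs = H.arcs) : G = H := by
  cases G; cases H; simp_all

lemma Acyclic.of_transGen {G H : Dgraph V}
    (h : ∀ a b, (a, b) ∈ H.arcs → Relation.TransGen (fun p q => (p, q) ∈ G.arcs) a b)
    (hG : G.Acyclic) : H.Acyclic := fun x hx =>
  hG x (Relation.TransGen.lift' id h x x hx)

lemma Acyclic.mono {G H : Dgraph V} (h : H.arcs ⊆ G.arcs) (hG : G.Acyclic) : H.Acyclic :=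
  hG.of_transGen fun _ _ hab => .single (h hab)

lemma Acyclic.ne_of_mem {G : Dgraph V} (hG : G.Acyclic) {u v : V} (h : (u, v) ∈ G.arcs) :
    u ≠ v := by
  rintro rfl
  exact hG u (.single h)

variable [DecidableEq V]

lemma indeg_pos_iff {G : Dgraph V} {v : V} : 0 < G.indeg v ↔ ∃ u, (u, v) ∈ G.arcs := by
  simp [indeg, Finset.card_pos, Finset.filter_nonempty_iff]

lemma outdeg_pos_iff {G : Dgraph V} {u : V} : 0 < G.outdeg u ↔ ∃ v, (u, v) ∈ G.arcs := by
  simp [outdeg, Finset.card_pos, Finset.filter_nonempty_iff]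

lemma mem_verts_of_indeg_pos {G : Dgraph V} {v : V} (h : 0 < G.indeg v) : v ∈ G.verts := by
  obtain ⟨u, huv⟩ := indeg_pos_iff.1 h
  exact G.head_mem _ huv

lemma mem_verts_of_outdeg_pos {G : Dgraph V} {u : V} (h : 0 < G.outdeg u) : u ∈ G.verts := by
  obtain ⟨v, huv⟩ := outdeg_pos_iff.1 h
  exact G.tail_mem _ huv

lemma eq_of_indeg_eq_one {G : Dgraph V} {v : V} (h : G.indeg v = 1) {a b : V × V}
    (ha : a ∈ G.arcs) (hb : b ∈ G.arcs) (hav : a.2 = v) (hbv : b.2 = v) : a = b :=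
  Finset.card_le_one.mp h.le a (by simp [ha, hav]) b (by simp [hb, hbv])

lemma eq_of_outdeg_eq_one {G : Dgraph V} {u : V} (h : G.outdeg u = 1) {a b : V × V}
    (ha : a ∈ G.arcs) (hb : b ∈ G.arcs) (hau : a.1 = u) (hbu : b.1 = u) : a = b :=
  Finset.card_le_one.mp h.le a (by simp [ha, hau]) b (by simp [hb, hbu])

lemma indeg_mono {G H : Dgraph V} (h : H.arcs ⊆ G.arcs) (v : V) : H.indeg v ≤ G.indeg v :=
  Finset.card_le_card (Finset.filter_subset_filter _ h)

lemma outdeg_mono {G H : Dgraph V} (h : H.arcs ⊆ G.arcs) (v : V) : H.outdeg v ≤ G.outdeg v :=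
  Finset.card_le_card (Finset.filter_subset_filter _ h)

lemma mem_ofArcs_verts {A : Finset (V × V)} {v : V} :
    v ∈ (ofArcs A).verts ↔ 0 < (ofArcs A).outdeg v ∨ 0 < (ofArcs A).indeg v := by
  simp [ofArcs, indeg_pos_iff, outdeg_pos_iff]

lemma isAdmissible_iff {G : Dgraph V} {S : Finset (V × V)}
    (hin : ∀ v, G.indeg v ≤ 2) (hout : ∀ v, G.outdeg v ≤ 2) :
    IsAdmissible G S ↔ S ⊆ G.arcs ∧ (∀ v, 0 < G.indeg v → (ofArcs S).indeg v = 1) ∧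
      ∀ v, 0 < G.outdeg v → 0 < (ofArcs S).outdeg v := by
  refine and_congr_right fun hS => ?_
  have hfilter (q : V × V → Prop) [DecidablePred q] :
      S.filter q = (G.arcs.filter q).filter (· ∈ S) := by
    rw [Finset.filter_comm, Finset.filter_mem_eq_inter, Finset.inter_eq_right.2 hS]
  simp only [indeg, outdeg, ofArcs, hfilter, Finset.card_pos]
  rw [forall_congr' fun v => Finset.nonempty_imp_card_filter_eq_one_iff _ (hin v),
    forall_congr' fun v => Finset.nonempty_imp_filter_nonempty_iff _ (hout v)]
  simp only [Finset.mem_filter]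
  constructor
  · rintro ⟨hforced, hheads, htails⟩
    refine ⟨fun v => ⟨fun hv a ha => hforced a ha.1 (.inl (ha.2 ▸ hv)), ?_⟩,
      fun v => ⟨fun hv a ha => hforced a ha.1 (.inr (ha.2 ▸ hv)), ?_⟩⟩
    · exact fun a ha b hb hab => hheads a ha.1 b hb.1 hab (ha.2.trans hb.2.symm)
    · exact fun a ha b hb hab => htails a ha.1 b hb.1 hab (ha.2.trans hb.2.symm)
  · rintro ⟨hheads, htails⟩
    refine ⟨fun a ha h => ?_,
      fun a ha b hb hab h => (hheads _).2 a ⟨ha, rfl⟩ b ⟨hb, h.symm⟩ hab,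
      fun a ha b hb hab h => (htails _).2 a ⟨ha, rfl⟩ b ⟨hb, h.symm⟩ hab⟩
    rcases h with h | h
    · exact (hheads _).1 h a ⟨ha, rfl⟩
    · exact (htails _).1 h a ⟨ha, rfl⟩

section SubdivideArc

variable {H K : Dgraph V} {u v w : V}

lemma indeg_subdivide_of_ne (huv : (u, v) ∈ H.arcs) (hw : w ∉ H.verts)
    (hK : K.arcs = insert (u, w) (insert (w, v) (H.arcs.erase (u, v)))) {x : V} (hx : x ≠ w) :
    K.indeg x = H.indeg x := by
  have hwv : (w, v) ∉ H.arcs := fun h => hw (H.tail_mem _ h)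
  simp only [indeg, hK, Finset.filter_insert, Finset.filter_erase, hx.symm, if_false]
  split_ifs with hv
  · subst hv
    rw [Finset.card_insert_of_notMem (by simp [hwv]),
      Finset.card_erase_add_one (by simpa using huv)]
  · rw [Finset.erase_eq_of_notMem (by simp [hv])]

lemma outdeg_subdivide_of_ne (huv : (u, v) ∈ H.arcs) (hw : w ∉ H.verts)
    (hK : K.arcs = insert (u, w) (insert (w, v) (H.arcs.erase (u, v)))) {x : V} (hx : x ≠ w) :
    K.outdeg x = H.outdeg x := by
  have huw : (u, w) ∉ H.arcs := fun h => hw (H.head_mem _ h)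
  simp only [outdeg, hK, Finset.filter_insert, Finset.filter_erase, hx.symm, if_false]
  split_ifs with hu
  · subst hu
    rw [Finset.card_insert_of_notMem (by simp [huw]),
      Finset.card_erase_add_one (by simpa using huv)]
  · rw [Finset.erase_eq_of_notMem (by simp [hu])]

lemma indeg_subdivide_self (huv : (u, v) ∈ H.arcs) (hw : w ∉ H.verts)
    (hK : K.arcs = insert (u, w) (insert (w, v) (H.arcs.erase (u, v)))) : K.indeg w = 1 := by
  have hvw : v ≠ w := fun h => hw (h ▸ H.head_mem _ huv)
  have hnone : H.arcs.filter (fun a => a.2 = w) = ∅ :=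
    Finset.filter_false_of_mem fun a ha h => hw (h ▸ H.head_mem a ha)
  simp [indeg, hK, Finset.filter_insert, Finset.filter_erase, hvw, hnone]

lemma outdeg_subdivide_self (huv : (u, v) ∈ H.arcs) (hw : w ∉ H.verts)
    (hK : K.arcs = insert (u, w) (insert (w, v) (H.arcs.erase (u, v)))) : K.outdeg w = 1 := by
  have huw : u ≠ w := fun h => hw (h ▸ H.tail_mem _ huv)
  have hnone : H.arcs.filter (fun a => a.1 = w) = ∅ :=
    Finset.filter_false_of_mem fun a ha h => hw (h ▸ H.tail_mem a ha)
  simp [outdeg, hK, Finset.filter_insert, Finset.filter_erase, huw, hnone]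

lemma Acyclic.subdivide (huv : (u, v) ∈ H.arcs) (hw : w ∉ H.verts)
    (hK : K.arcs = insert (u, w) (insert (w, v) (H.arcs.erase (u, v)))) (hH : H.Acyclic) :
    K.Acyclic := by
  have huw : u ≠ w := fun h => hw (h ▸ H.tail_mem _ huv)
  let f : V → V := fun z => if z = w then u else z
  have hfw : f w = u := if_pos rfl
  have hf : ∀ z ∈ H.verts, f z = z := fun z hz => if_neg fun h : z = w => hw (h ▸ hz)
  have hfu : f u = u := hf u (H.tail_mem _ huv)
  -- contracting the new arc `(u, w)` maps every other path of `K` onto a path of `H`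
  have hstep : ∀ a b, (a, b) ∈ K.arcs →
      (a = u ∧ b = w) ∨ Relation.TransGen (fun p q => (p, q) ∈ H.arcs) (f a) (f b) := by
    intro a b hab
    simp only [hK, Finset.mem_insert, Finset.mem_erase, Prod.mk.injEq] at hab
    rcases hab with hab | ⟨rfl, rfl⟩ | ⟨-, hab⟩
    · exact .inl hab
    · rw [hfw, hf _ (H.head_mem _ huv)]
      exact .inr (.single huv)
    · rw [hf _ (H.tail_mem _ hab), hf _ (H.head_mem _ hab)]
      exact .inr (.single hab)
  have hpath : ∀ a b, Relation.TransGen (fun p q => (p, q) ∈ K.arcs) a b →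
      (a = u ∧ b = w) ∨ Relation.TransGen (fun p q => (p, q) ∈ H.arcs) (f a) (f b) := by
    intro a b hab
    induction hab with
    | single h => exact hstep _ _ h
    | @tail b c _ hbc ih =>
      rcases ih with ⟨ha, hb⟩ | ih <;> rcases hstep _ _ hbc with ⟨hb', hc⟩ | h
      · exact absurd (hb'.symm.trans hb) huw
      · have : f a = f b := by rw [ha, hb, hfu, hfw]
        exact .inr (this ▸ h)
      · have : f c = f b := by rw [hc, hb', hfu, hfw]
        exact .inr (this ▸ ih)
      · exact .inr (ih.trans h)
  intro x hx
  rcases hpath x x hx with ⟨rfl, h⟩ | h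
  · exact huw h
  · exact hH _ h

end SubdivideArc

lemma exists_subdivideArc_eq {G : Dgraph V} {u v w : V} (huw : (u, w) ∈ G.arcs)
    (hwv : (w, v) ∈ G.arcs) (hu : u ≠ w) (hv : v ≠ w) (huv : (u, v) ∉ G.arcs)
    (hin : G.indeg w = 1) (hout : G.outdeg w = 1) :
    ∃ H : Dgraph V, SubdivideArc H G ∧ H.verts = G.verts.erase w ∧
      ∀ a ∈ H.arcs, a = (u, v) ∨ a ∈ G.arcs := by
  let F := G.arcs.filter fun a => a.1 ≠ w ∧ a.2 ≠ w
  let H : Dgraph V :=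
    { verts := G.verts.erase w
      arcs := insert (u, v) F
      tail_mem := by
        simp only [F, Finset.mem_insert, Finset.mem_filter, Finset.mem_erase]
        rintro a (rfl | ⟨ha, ha1, -⟩)
        · exact ⟨hu, G.tail_mem (u, w) huw⟩
        · exact ⟨ha1, G.tail_mem _ ha⟩
      head_mem := by
        simp only [F, Finset.mem_insert, Finset.mem_filter, Finset.mem_erase]
        rintro a (rfl | ⟨ha, -, ha2⟩)
        · exact ⟨hv, G.head_mem (w, v) hwv⟩
        · exact ⟨ha2, G.head_mem _ ha⟩ }
  have hF : (u, v) ∉ F := fun h => huv (Finset.mem_filter.1 h).1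
  refine ⟨H, ⟨u, v, w, Finset.mem_insert_self _ _, Finset.notMem_erase _ _,
    (Finset.insert_erase (G.head_mem _ huw)).symm, ?_⟩, rfl, ?_⟩
  · change G.arcs = insert (u, w) (insert (w, v) ((insert (u, v) F).erase (u, v)))
    rw [Finset.erase_insert hF]
    ext a
    simp only [F, Finset.mem_insert, Finset.mem_filter]
    constructor
    · intro ha
      by_cases h2 : a.2 = w
      · exact .inl (eq_of_indeg_eq_one hin ha huw h2 rfl)
      by_cases h1 : a.1 = w
      · exact .inr (.inl (eq_of_outdeg_eq_one hout ha hwv h1 rfl))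
      exact .inr (.inr ⟨ha, h1, h2⟩)
    · rintro (rfl | rfl | ⟨ha, -⟩) <;> assumption
  · simp only [H, F, Finset.mem_insert, Finset.mem_filter]
    exact fun a => Or.imp_right And.left

lemma IsRBPN.degrees {N : Dgraph V} {X : Finset V} (hN : IsRBPN N X) {ρ : V}
    (hρ : ρ ∈ N.verts) (hρin : N.indeg ρ = 0) :
    ρ ∉ X ∧ (∀ v ∈ N.verts, v ≠ ρ → N.indeg v = 1 ∨ N.indeg v = 2) ∧
      (∀ v ∈ N.verts, N.outdeg v = 0 ↔ v ∈ X) ∧ ∀ v ∈ N.verts, N.outdeg v ≤ 2 := by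
  obtain ⟨-, -, -, ρ', -, -, hρout, huniq, hleaf, hint⟩ := hN
  obtain rfl := huniq ρ hρ hρin
  have hρX : ρ ∉ X := fun h => by simp [((hleaf ρ hρ).2 h).2.1] at hρin
  refine ⟨hρX, fun v hv hvρ => ?_, fun v hv => ⟨fun h0 => ?_, ?_⟩, fun v hv => ?_⟩
  · by_cases hvX : v ∈ X
    · exact .inl ((hleaf v hv).2 hvX).2.1
    · exact (hint v hv hvX hvρ).imp And.left And.left
  · by_contra hvX
    have hvρ : v ≠ ρ := by rintro rfl; omega
    have := hint v hv hvX hvρ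
    omega
  · exact fun hvX => ((hleaf v hv).2 hvX).2.2
  · by_cases hvρ : v = ρ
    · subst hvρ; omega
    by_cases hvX : v ∈ X
    · simp [((hleaf v hv).2 hvX).2.2]
    · have := hint v hv hvX hvρ
      omega

structure IsSubdividedTree (G : Dgraph V) (X : Finset V) (ρ : V) : Prop where
  acyclic : G.Acyclic
  nonempty : X.Nonempty
  subset : X ⊆ G.verts
  root_mem : ρ ∈ G.verts
  root_notMem : ρ ∉ X
  indeg_root : G.indeg ρ = 0
  indeg_eq_one : ∀ v ∈ G.verts, v ≠ ρ → G.indeg v = 1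
  outdeg_eq_zero_iff : ∀ v ∈ G.verts, G.outdeg v = 0 ↔ v ∈ X
  outdeg_le_two : ∀ v ∈ G.verts, G.outdeg v ≤ 2

lemma IsRBPT.exists_isSubdividedTree {T : Dgraph V} {X : Finset V} (hT : IsRBPT T X) :
    ∃ ρ, IsSubdividedTree T X ρ := by
  obtain ⟨-, -, -, ρ, hρ, hρin, -⟩ := hT.1
  obtain ⟨hρX, hin, hout0, hout2⟩ := hT.1.degrees hρ hρin
  exact ⟨ρ, hT.1.1, hT.1.2.1, hT.1.2.2.1, hρ, hρX, hρin,
    fun v hv hvρ => (hin v hv hvρ).resolve_right (hT.2 v hv), hout0, hout2⟩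

namespace IsSubdividedTree

variable {G H K : Dgraph V} {X : Finset V} {ρ : V}

lemma isRBPT (hG : IsSubdividedTree G X ρ)
    (hsmooth : ∀ v ∈ G.verts, G.indeg v = 1 → G.outdeg v ≠ 1) : IsRBPT G X := by
  have hρout := hG.outdeg_le_two ρ hG.root_mem
  have hρout0 := (hG.outdeg_eq_zero_iff ρ hG.root_mem).not.2 hG.root_notMem
  refine ⟨⟨hG.acyclic, hG.nonempty, hG.subset, ρ, hG.root_mem, hG.indeg_root, by omega,
    fun v hv h0 => ?_, fun v hv => ⟨fun h => ?_, fun hvX => ?_⟩, fun v hv hvX hvρ => ?_⟩,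
    fun v hv => ?_⟩
  · by_contra hvρ
    have := hG.indeg_eq_one v hv hvρ
    omega
  · exact (hG.outdeg_eq_zero_iff v hv).1 h.2.2
  · have hvρ : v ≠ ρ := fun h => hG.root_notMem (h ▸ hvX)
    exact ⟨hv, hG.indeg_eq_one v hv hvρ, (hG.outdeg_eq_zero_iff v hv).2 hvX⟩
  · have hin := hG.indeg_eq_one v hv hvρ
    have := hsmooth v hv hin
    have := (hG.outdeg_eq_zero_iff v hv).not.2 hvX
    have := hG.outdeg_le_two v hv
    omega
  · by_cases hvρ : v = ρ
    · simp [hvρ, hG.indeg_root]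
    · simp [hG.indeg_eq_one v hv hvρ]

lemma subdivideArc (hH : IsSubdividedTree H X ρ) (hHK : SubdivideArc H K) :
    IsSubdividedTree K X ρ := by
  obtain ⟨u, v, w, huv, hw, hKv, hKa⟩ := hHK
  have hne : ∀ x ∈ H.verts, x ≠ w := fun x hx h => hw (h ▸ hx)
  have hmem : ∀ x ∈ K.verts, x = w ∨ x ∈ H.verts := fun x hx =>
    Finset.mem_insert.1 (hKv ▸ hx)
  refine ⟨hH.acyclic.subdivide huv hw hKa, hH.nonempty, hKv ▸ hH.subset.trans
    (Finset.subset_insert _ _), hKv ▸ Finset.mem_insert_of_mem hH.root_mem, hH.root_notMem,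
    ?_, fun x hx hxρ => ?_, fun x hx => ?_, fun x hx => ?_⟩
  · rw [indeg_subdivide_of_ne huv hw hKa (hne _ hH.root_mem), hH.indeg_root]
  all_goals rcases hmem x hx with rfl | hx
  · exact indeg_subdivide_self huv hw hKa
  · rw [indeg_subdivide_of_ne huv hw hKa (hne x hx), hH.indeg_eq_one x hx hxρ]
  · simp only [outdeg_subdivide_self huv hw hKa, one_ne_zero, false_iff]
    exact fun hX => hw (hH.subset hX)
  · rw [outdeg_subdivide_of_ne huv hw hKa (hne x hx), hH.outdeg_eq_zero_iff x hx]
  · simp [outdeg_subdivide_self huv hw hKa]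
  · rw [outdeg_subdivide_of_ne huv hw hKa (hne x hx)]
    exact hH.outdeg_le_two x hx

lemma of_subdivideArc (hK : IsSubdividedTree K X ρ) (hHK : SubdivideArc H K)
    (hH : H.Acyclic) : IsSubdividedTree H X ρ := by
  obtain ⟨u, v, w, huv, hw, hKv, hKa⟩ := hHK
  have hne : ∀ x ∈ H.verts, x ≠ w := fun x hx h => hw (h ▸ hx)
  have hmemK : ∀ x ∈ H.verts, x ∈ K.verts := fun x hx => hKv ▸ Finset.mem_insert_of_mem hx
  have hwK : w ∈ K.verts := hKv ▸ Finset.mem_insert_self _ _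
  have hwX : w ∉ X := fun hX => by
    simpa [outdeg_subdivide_self huv hw hKa] using (hK.outdeg_eq_zero_iff w hwK).2 hX
  have hρw : ρ ≠ w := fun h => by
    simpa [h, indeg_subdivide_self huv hw hKa] using hK.indeg_root
  have hmemH : ∀ x ∈ K.verts, x ≠ w → x ∈ H.verts := fun x hx hxw =>
    (Finset.mem_insert.1 (hKv ▸ hx)).resolve_left hxw
  refine ⟨hH, hK.nonempty, fun x hX => hmemH x (hK.subset hX) (fun h => hwX (h ▸ hX)),
    hmemH ρ hK.root_mem hρw, hK.root_notMem, ?_, fun x hx hxρ => ?_, fun x hx => ?_,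
    fun x hx => ?_⟩
  · rw [← indeg_subdivide_of_ne huv hw hKa hρw, hK.indeg_root]
  · rw [← indeg_subdivide_of_ne huv hw hKa (hne x hx), hK.indeg_eq_one x (hmemK x hx) hxρ]
  · rw [← outdeg_subdivide_of_ne huv hw hKa (hne x hx), hK.outdeg_eq_zero_iff x (hmemK x hx)]
  · rw [← outdeg_subdivide_of_ne huv hw hKa (hne x hx)]
    exact hK.outdeg_le_two x (hmemK x hx)

lemma isSubdivisionOf (hG : IsSubdividedTree G X ρ) (hGH : IsSubdivisionOf G H) :
    IsSubdividedTree H X ρ := by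
  induction hGH with
  | refl => exact hG
  | step _ hstep ih => exact ih.subdivideArc hstep

lemma exists_subdivideArc (hG : IsSubdividedTree G X ρ) {w : V} (hin : G.indeg w = 1)
    (hout : G.outdeg w = 1) :
    ∃ H : Dgraph V, SubdivideArc H G ∧ H.verts = G.verts.erase w ∧ H.Acyclic := by
  obtain ⟨u, huw⟩ := indeg_pos_iff.1 (by omega : 0 < G.indeg w)
  obtain ⟨v, hwv⟩ := outdeg_pos_iff.1 (by omega : 0 < G.outdeg w)
  have hvρ : v ≠ ρ := by
    rintro rfl
    simpa [hG.indeg_root] using indeg_pos_iff.2 ⟨_, hwv⟩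
  have hv := hG.indeg_eq_one v (G.head_mem _ hwv) hvρ
  have huv : (u, v) ∉ G.arcs := fun h =>
    hG.acyclic.ne_of_mem huw (congrArg Prod.fst (eq_of_indeg_eq_one hv h hwv rfl rfl))
  obtain ⟨H, hHG, hHv, hHa⟩ := exists_subdivideArc_eq huw hwv (hG.acyclic.ne_of_mem huw)
    (hG.acyclic.ne_of_mem hwv).symm huv hin hout
  refine ⟨H, hHG, hHv, hG.acyclic.of_transGen fun a b hab => ?_⟩
  rcases hHa _ hab with h | h
  · cases h
    exact .tail (.single huw) hwv
  · exact .single h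

lemma exists_isRBPT_isSubdivisionOf (hG : IsSubdividedTree G X ρ) :
    ∃ T : Dgraph V, IsRBPT T X ∧ IsSubdivisionOf T G := by
  induction hn : G.verts.card using Nat.strong_induction_on generalizing G with
  | _ n ih =>
  by_cases hsmooth : ∃ w ∈ G.verts, G.indeg w = 1 ∧ G.outdeg w = 1
  · obtain ⟨w, hw, hin, hout⟩ := hsmooth
    obtain ⟨H, hHG, hHv, hH⟩ := hG.exists_subdivideArc hin hout
    have hcard : H.verts.card < n := by
      rw [← hn, hHv]
      exact Finset.card_erase_lt_of_mem hw
    obtain ⟨T, hT, hTH⟩ := ih _ hcard (hG.of_subdivideArc hHG hH) rfl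
    exact ⟨T, hT, hTH.step hHG⟩
  · push Not at hsmooth
    exact ⟨G, hG.isRBPT hsmooth, .refl G⟩

end IsSubdividedTree

lemma exists_isRBPT_isSubdivisionOf_iff {G : Dgraph V} {X : Finset V} :
    (∃ T : Dgraph V, IsRBPT T X ∧ IsSubdivisionOf T G) ↔ ∃ ρ, IsSubdividedTree G X ρ := by
  constructor
  · rintro ⟨T, hT, hTG⟩
    obtain ⟨ρ, hρ⟩ := hT.exists_isSubdividedTree
    exact ⟨ρ, hρ.isSubdivisionOf hTG⟩
  · rintro ⟨ρ, hG⟩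
    exact hG.exists_isRBPT_isSubdivisionOf

lemma IsSubdividedTree.eq_root_of_indeg_eq_zero {G : Dgraph V} {X : Finset V} {ρ v : V}
    (hG : IsSubdividedTree G X ρ) (hv : v ∈ G.verts) (hv0 : G.indeg v = 0) : ρ = v := by
  by_contra h
  have := hG.indeg_eq_one v hv (Ne.symm h)
  omega

namespace IsRBPN

variable {N : Dgraph V} {X : Finset V} {ρ : V}

lemma isAdmissible_iff (hN : IsRBPN N X) (hρ : ρ ∈ N.verts) (hρin : N.indeg ρ = 0)
    {S : Finset (V × V)} :
    IsAdmissible N S ↔ S ⊆ N.arcs ∧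
      (∀ v ∈ N.verts, v ≠ ρ → (ofArcs S).indeg v = 1) ∧
      ∀ v ∈ N.verts, v ∉ X → 0 < (ofArcs S).outdeg v := by
  obtain ⟨-, hin, hout0, hout2⟩ := hN.degrees hρ hρin
  have hinpos (v : V) : 0 < N.indeg v ↔ v ∈ N.verts ∧ v ≠ ρ :=
    ⟨fun h => ⟨mem_verts_of_indeg_pos h, by rintro rfl; omega⟩,
      fun ⟨hv, hvρ⟩ => by have := hin v hv hvρ; omega⟩
  have houtpos (v : V) : 0 < N.outdeg v ↔ v ∈ N.verts ∧ v ∉ X :=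
    ⟨fun h => ⟨mem_verts_of_outdeg_pos h, fun hX => by
      rw [(hout0 v (mem_verts_of_outdeg_pos h)).2 hX] at h; omega⟩,
      fun ⟨hv, hvX⟩ => Nat.pos_of_ne_zero ((hout0 v hv).not.2 hvX)⟩
  have hin2 (v : V) : N.indeg v ≤ 2 := by
    by_cases h : 0 < N.indeg v
    · obtain ⟨hv, hvρ⟩ := (hinpos v).1 h
      have := hin v hv hvρ
      omega
    · omega
  have hout2' (v : V) : N.outdeg v ≤ 2 := by
    by_cases h : 0 < N.outdeg v
    · exact hout2 v (mem_verts_of_outdeg_pos h)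
    · omega
  simp only [Dgraph.isAdmissible_iff hin2 hout2', hinpos, houtpos, and_imp]

lemma isSubdividedTree_iff (hN : IsRBPN N X) (hρ : ρ ∈ N.verts) (hρin : N.indeg ρ = 0)
    {τ : Dgraph V} (hV : τ.verts = N.verts) (hA : τ.arcs ⊆ N.arcs) :
    IsSubdividedTree τ X ρ ↔ (∀ v ∈ N.verts, v ≠ ρ → τ.indeg v = 1) ∧
      ∀ v ∈ N.verts, v ∉ X → 0 < τ.outdeg v := by
  obtain ⟨hρX, -, hout0, hout2⟩ := hN.degrees hρ hρin
  refine ⟨fun h => ⟨hV ▸ h.indeg_eq_one, fun v hv hvX =>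
      Nat.pos_of_ne_zero ((h.outdeg_eq_zero_iff v (hV ▸ hv)).not.2 hvX)⟩,
    fun ⟨hin, hout⟩ => ?_⟩
  refine ⟨hN.1.mono hA, hN.2.1, hV ▸ hN.2.2.1, hV ▸ hρ, hρX,
    Nat.le_zero.1 (hρin ▸ indeg_mono hA ρ), hV ▸ hin,
    fun v hv => ⟨fun h => ?_, fun hX => ?_⟩,
    fun v hv => (outdeg_mono hA v).trans (hout2 v (hV ▸ hv))⟩
  · by_contra hvX
    have := hout v (hV ▸ hv) hvX
    omega
  · have := outdeg_mono hA v
    have := (hout0 v (hV ▸ hv)).2 hX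
    omega

lemma isSupportTree_iff (hN : IsRBPN N X) {τ : Dgraph V} :
    IsSupportTree N X τ ↔ τ.verts = N.verts ∧ IsAdmissible N τ.arcs := by
  obtain ⟨-, -, -, ρ, hρ, hρin, -⟩ := id hN
  rw [IsSupportTree, exists_isRBPT_isSubdivisionOf_iff, hN.isAdmissible_iff hρ hρin]
  refine and_congr_right fun hV => and_congr_right fun hA => ?_
  refine Iff.trans ⟨fun ⟨ρ', h⟩ => ?_, fun h => ⟨ρ, h⟩⟩
    (hN.isSubdividedTree_iff (τ := τ) hρ hρin hV hA)
  have hτρ : τ.indeg ρ = 0 := Nat.le_zero.1 (hρin ▸ indeg_mono hA ρ)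
  rwa [h.eq_root_of_indeg_eq_zero (hV ▸ hρ) hτρ] at h

lemma ofArcs_verts_eq (hN : IsRBPN N X) {S : Finset (V × V)} (hS : IsAdmissible N S) :
    (ofArcs S).verts = N.verts := by
  obtain ⟨-, -, -, ρ, hρ, hρin, -⟩ := id hN
  obtain ⟨hρX, -⟩ := hN.degrees hρ hρin
  obtain ⟨hSN, hin, hout⟩ := (hN.isAdmissible_iff hρ hρin).1 hS
  ext v
  refine ⟨fun hv => ?_, fun hv => mem_ofArcs_verts.2 ?_⟩
  · rcases mem_ofArcs_verts.1 hv with h | h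
    · exact mem_verts_of_outdeg_pos ((outdeg_mono hSN v).trans_lt' h)
    · exact mem_verts_of_indeg_pos ((indeg_mono hSN v).trans_lt' h)
  by_cases hvρ : v = ρ
  · exact .inl (hout v hv (hvρ ▸ hρX))
  · exact .inr (by rw [hin v hv hvρ]; exact one_pos)

end IsRBPN

end Dgraph

/-- For a rooted binary phylogenetic `X`-network `N`, the map
`S ↦ N[S]` is a bijection between the admissible arc-sets of `N` and the support
trees of `N`. -/
theorem stmt1 {V : Type*} [DecidableEq V] (N : Dgraph V) (X : Finset V)
    (hN : Dgraph.IsRBPN N X) :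
    Set.BijOn (fun S : Finset (V × V) => Dgraph.ofArcs S)
      {S : Finset (V × V) | Dgraph.IsAdmissible N S}
      {τ : Dgraph V | Dgraph.IsSupportTree N X τ} := by
  refine ⟨fun S hS => ?_, fun S₁ _ S₂ _ h => congrArg Dgraph.arcs h, fun τ hτ => ?_⟩
  · exact hN.isSupportTree_iff.2 ⟨hN.ofArcs_verts_eq hS, hS⟩
  · obtain ⟨hV, hadm⟩ := hN.isSupportTree_iff.1 hτ
    exact ⟨τ.arcs, hadm, Dgraph.ext ((hN.ofArcs_verts_eq hadm).trans hV.symm) rfl⟩
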